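/- arXiv:2106.13713 — 3 statements merged into one kernel-verified Lean document; each statement's English description precedes it below -/
import Mathlib

section
/- Let ξ, η, x₀ be real with η ≠ 0, and let (x,t) ∈ ℝ² be a point with 4tξ + x - x₀ ≠ 0. Then the one-positon function q(x,t) = 2η · exp(-4it(ξ² - η²) - 2ixξ) · csch(2η(4tξ + x - x₀)) satisfies the defocusing nonlinear Schrödinger equation i·∂q/∂t + ∂²q/∂x² - 2|q|²q = 0 at (x,t). In particular, if additionally ξ ≥ 0 and x₀ < 0, then 4tξ + x - x₀ > 0 for all x ≥ 0 and t ≥ 0, so q is smooth on the closed quarter-plane {x ≥ 0, t ≥ 0} and solves the defocusing NLS equation everywhere there. -/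
open Complex

/-- The one-positon profile of the defocusing NLS equation:
`q(x,t) = 2η · exp(-4it(ξ² - η²) - 2ixξ) · csch(2η(4tξ + x - x₀))`. -/
noncomputable def positonNLS (ξ η x₀ : ℝ) (x t : ℝ) : ℂ :=
  2 * (η : ℂ) * Complex.exp (-4 * Complex.I * (t : ℂ) * ((ξ : ℂ) ^ 2 - (η : ℂ) ^ 2)
      - 2 * Complex.I * (x : ℂ) * (ξ : ℂ))
    * ((Real.sinh (2 * η * (4 * t * ξ + x - x₀)) : ℂ))⁻¹

/-- The defocusing NLS equation `i qₜ + qₓₓ - 2|q|² q = 0` holds for `q` at the point `(x,t)`. -/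
def SolvesDefocusingNLSAt (q : ℝ → ℝ → ℂ) (x t : ℝ) : Prop :=
  Complex.I * deriv (fun s : ℝ => q x s) t
    + deriv (fun s : ℝ => deriv (fun u : ℝ => q u t) s) x
    - 2 * ((‖q x t‖ : ℝ) : ℂ) ^ 2 * q x t = 0

/-! NLS is Galilean invariant: with `y = x - 2kt`, the residual of
`q(x,t) = e^{i(kx - ωt)} u(y)` is `e^{i(kx - ωt)}` times that of the stationary equation
`u'' + (ω - k²) u - 2|u|² u = 0`.  The positon is such a wave with `k = -2ξ`, `a = 2η`,
`ω = k² - a²` and the real profile `u(y) = a csch(a(y - x₀))`, which solves `u'' = a² u + 2u³`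
because `csch'' = csch + 2 csch³`. -/

open Filter Topology

noncomputable def modulatedWave (u : ℝ → ℂ) (k ω : ℝ) (x t : ℝ) : ℂ :=
  exp (((k * x - ω * t : ℝ) : ℂ) * I) * u (x - 2 * k * t)

noncomputable def cschProfile (a z₀ y : ℝ) : ℝ :=
  a / Real.sinh (a * (y - z₀))

section modulatedWave

variable {f : ℝ → ℂ} {f' : ℂ} {k ω x t : ℝ}

lemma hasDerivAt_modulatedWave_x (hf : HasDerivAt f f' (x - 2 * k * t)) :
    HasDerivAt (fun x => modulatedWave f k ω x t)
      (exp (((k * x - ω * t : ℝ) : ℂ) * I) * (k * I * f (x - 2 * k * t) + f')) x := by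
  have hphase : HasDerivAt (fun x : ℝ => ((k * x - ω * t : ℝ) : ℂ) * I) (k * I) x := by
    simpa using ((((hasDerivAt_id x).const_mul k).sub_const (ω * t)).ofReal_comp).mul_const I
  have hshift : HasDerivAt (fun x => f (x - 2 * k * t)) f' x := by
    simpa using hf.comp_sub_const x (2 * k * t)
  exact (hphase.cexp.mul hshift).congr_deriv (by ring)

lemma hasDerivAt_modulatedWave_t (hf : HasDerivAt f f' (x - 2 * k * t)) :
    HasDerivAt (fun t => modulatedWave f k ω x t)
      (exp (((k * x - ω * t : ℝ) : ℂ) * I) * (-ω * I * f (x - 2 * k * t) - 2 * k * f')) t := by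
  have hphase : HasDerivAt (fun t : ℝ => ((k * x - ω * t : ℝ) : ℂ) * I) (-ω * I) t := by
    simpa using ((((hasDerivAt_id t).const_mul ω).const_sub (k * x)).ofReal_comp).mul_const I
  have hshift : HasDerivAt (fun t => f (x - 2 * k * t)) (-(2 * k) * f') t := by
    refine (hf.scomp t (((hasDerivAt_id t).const_mul (2 * k)).const_sub x)).congr_deriv ?_
    rw [Complex.real_smul]
    push_cast
    ring
  exact (hphase.cexp.mul hshift).congr_deriv (by ring)

lemma solvesDefocusingNLSAt_modulatedWave_iff {u u' : ℝ → ℂ} {u'' : ℂ}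
    (hu : ∀ᶠ y in 𝓝 (x - 2 * k * t), HasDerivAt u (u' y) y)
    (hu' : HasDerivAt u' u'' (x - 2 * k * t)) :
    SolvesDefocusingNLSAt (modulatedWave u k ω) x t ↔
      u'' + ((ω - k ^ 2 : ℝ) : ℂ) * u (x - 2 * k * t)
        - 2 * ((‖u (x - 2 * k * t)‖ : ℝ) : ℂ) ^ 2 * u (x - 2 * k * t) = 0 := by
  have hux : (fun x => deriv (fun x => modulatedWave u k ω x t) x)
      =ᶠ[𝓝 x] (modulatedWave (fun y => k * I * u y + u' y) k ω · t) :=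
    ((tendsto_id.sub_const (2 * k * t)).eventually hu).mono fun _ h =>
      (hasDerivAt_modulatedWave_x h).deriv
  have huxx : HasDerivAt (fun y => k * I * u y + u' y) (k * I * u' (x - 2 * k * t) + u'')
      (x - 2 * k * t) :=
    (hu.self_of_nhds.const_mul (k * I)).add hu'
  rw [SolvesDefocusingNLSAt, (hasDerivAt_modulatedWave_t hu.self_of_nhds).deriv, hux.deriv_eq,
    (hasDerivAt_modulatedWave_x huxx).deriv, modulatedWave, norm_mul,
    norm_exp_ofReal_mul_I, one_mul]
  set e := exp (((k * x - ω * t : ℝ) : ℂ) * I)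
  set y := x - 2 * k * t
  push_cast
  constructor
  · intro h
    apply mul_left_cancel₀ (exp_ne_zero _ : e ≠ 0)
    linear_combination h + e * u y * (ω - k ^ 2) * I_sq
  · intro h
    linear_combination e * h - e * u y * (ω - k ^ 2) * I_sq

end modulatedWave

section cschProfile

variable {a z₀ y : ℝ}

lemma sinh_mul_sub_ne_zero (ha : a ≠ 0) (hy : y ≠ z₀) : Real.sinh (a * (y - z₀)) ≠ 0 := by
  rw [Ne, Real.sinh_eq_zero]
  exact mul_ne_zero ha (sub_ne_zero.mpr hy)

lemma hasDerivAt_cschProfile (ha : a ≠ 0) (hy : y ≠ z₀) :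
    HasDerivAt (cschProfile a z₀)
      (-a ^ 2 * Real.cosh (a * (y - z₀)) / Real.sinh (a * (y - z₀)) ^ 2) y := by
  have hr : HasDerivAt (fun y => a * (y - z₀)) a y := by
    simpa using ((hasDerivAt_id y).sub_const z₀).const_mul a
  exact ((hasDerivAt_const y a).div hr.sinh (sinh_mul_sub_ne_zero ha hy)).congr_deriv (by ring)

lemma hasDerivAt_cschProfile_deriv (ha : a ≠ 0) (hy : y ≠ z₀) :
    HasDerivAt (fun y => -a ^ 2 * Real.cosh (a * (y - z₀)) / Real.sinh (a * (y - z₀)) ^ 2)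
      (a ^ 2 * cschProfile a z₀ y + 2 * cschProfile a z₀ y ^ 3) y := by
  have hr : HasDerivAt (fun y => a * (y - z₀)) a y := by
    simpa using ((hasDerivAt_id y).sub_const z₀).const_mul a
  have hs := sinh_mul_sub_ne_zero ha hy
  refine ((hr.cosh.const_mul (-a ^ 2)).div (hr.sinh.pow 2) (pow_ne_zero 2 hs)).congr_deriv ?_
  simp only [Pi.pow_apply, cschProfile]
  field_simp
  norm_num
  linear_combination 2 * Real.sinh (a * (y - z₀)) * Real.cosh_sq (a * (y - z₀))

end cschProfile

theorem solvesDefocusingNLSAt_modulatedWave_cschProfile {a z₀ k x t : ℝ} (ha : a ≠ 0)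
    (hy : x - 2 * k * t ≠ z₀) :
    SolvesDefocusingNLSAt
      (modulatedWave (fun y => (cschProfile a z₀ y : ℂ)) k (k ^ 2 - a ^ 2)) x t := by
  rw [solvesDefocusingNLSAt_modulatedWave_iff
    ((eventually_ne_nhds hy).mono fun _ hy => (hasDerivAt_cschProfile ha hy).ofReal_comp)
    (hasDerivAt_cschProfile_deriv ha hy).ofReal_comp, Complex.norm_real, Real.norm_eq_abs,
    ← Complex.ofReal_pow, sq_abs]
  push_cast
  ring

lemma positonNLS_eq_modulatedWave (ξ η x₀ : ℝ) :
    positonNLS ξ η x₀ =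
      modulatedWave (fun y => (cschProfile (2 * η) x₀ y : ℂ)) (-2 * ξ)
        ((-2 * ξ) ^ 2 - (2 * η) ^ 2) := by
  funext x t
  rw [positonNLS, modulatedWave, cschProfile,
    show x - 2 * (-2 * ξ) * t - x₀ = 4 * t * ξ + x - x₀ by ring]
  push_cast
  ring_nf

/-- For real `ξ, η, x₀` with `η ≠ 0`, the one-positon function satisfies the defocusing
nonlinear Schrödinger equation at every point `(x,t)` with `4tξ + x - x₀ ≠ 0`.  In particular,
if moreover `ξ ≥ 0` and `x₀ < 0`, then `4tξ + x - x₀ > 0` on the closed quarter-plane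
`{x ≥ 0, t ≥ 0}` and the positon solves defocusing NLS everywhere there. -/
theorem positon_solves_defocusing_NLS (ξ η x₀ : ℝ) (hη : η ≠ 0) :
    (∀ x t : ℝ, 4 * t * ξ + x - x₀ ≠ 0 → SolvesDefocusingNLSAt (positonNLS ξ η x₀) x t) ∧
    (ξ ≥ 0 → x₀ < 0 → ∀ x t : ℝ, 0 ≤ x → 0 ≤ t →
      4 * t * ξ + x - x₀ > 0 ∧ SolvesDefocusingNLSAt (positonNLS ξ η x₀) x t) := by
  have hsolves (x t : ℝ) (h : 4 * t * ξ + x - x₀ ≠ 0) :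
      SolvesDefocusingNLSAt (positonNLS ξ η x₀) x t := by
    rw [positonNLS_eq_modulatedWave]
    refine solvesDefocusingNLSAt_modulatedWave_cschProfile (mul_ne_zero two_ne_zero hη) ?_
    contrapose! h
    linarith
  refine ⟨hsolves, fun hξ hx₀ x t hx ht => ?_⟩
  have hpos : 4 * t * ξ + x - x₀ > 0 := by nlinarith
  exact ⟨hpos, hsolves x t hpos.ne'⟩
end

section
/- Let l be a filter on ℂ along which |k| → ∞ (i.e., l is finer than the pullback of the atTop filter under the norm). Let λ ∈ {1,-1}, let u, v ∈ ℂ and let I ∈ ℝ. Suppose a, b : ℂ → ℂ satisfy, along l, a(k) = 1 - (λ I)/(2ik) + O(1/|k|²) and b(k) = u/(2ik) - (v + λ u I)/(2ik)² + O(1/|k|³). Then, along l, b(k)/a(k) = u/(2ik) + v/(4k²) + O(1/|k|³); in particular all terms involving I cancel from the expansion of the ratio b/a. -/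
/-!
Write `a = A + O(|k|⁻²)` and `b = B + O(|k|⁻³)` with `A`, `B` the explicit truncations and
`t = u/(2ik) + v/(4k²)`. Since `a → 1`, it suffices to bound `b - t a`. Because
`(2ik)² = -4k²`, the terms `λJu/(2ik)²` of `B` and of `t A` cancel exactly and
`B - t A = λJv/(8ik³)`; the remaining pieces `b - B` and `t (a - A)` are `O(|k|⁻³)` as well.
-/

open Complex Filter Asymptotics Topology

section InverseNormPowers

variable {E : Type*} [SeminormedAddCommGroup E] {l : Filter E}

lemma isBigO_inv_norm_pow_of_le (hl : Tendsto (‖·‖) l atTop) {m n : ℕ} (hmn : m ≤ n) :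
    (fun k : E => (‖k‖ ^ n)⁻¹) =O[l] fun k => (‖k‖ ^ m)⁻¹ := by
  refine IsBigO.of_bound 1 ?_
  filter_upwards [hl.eventually_ge_atTop 1] with k hk
  have hm : 0 < ‖k‖ ^ m := pow_pos (one_pos.trans_le hk) m
  rw [one_mul, Real.norm_of_nonneg (by positivity), Real.norm_of_nonneg (by positivity)]
  exact inv_anti₀ hm (pow_le_pow_right₀ hk hmn)

lemma tendsto_inv_norm_pow_atTop_zero (hl : Tendsto (‖·‖) l atTop) {n : ℕ} (hn : n ≠ 0) :
    Tendsto (fun k : E => (‖k‖ ^ n)⁻¹) l (𝓝 0) :=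
  tendsto_inv_atTop_zero.comp ((tendsto_pow_atTop hn).comp hl)

lemma Asymptotics.IsBigO.mul_inv_norm_pow {R : Type*} [SeminormedRing R] {f g : E → R} {m n : ℕ}
    (hf : f =O[l] fun k => (‖k‖ ^ m)⁻¹) (hg : g =O[l] fun k => (‖k‖ ^ n)⁻¹) :
    (fun k => f k * g k) =O[l] fun k => (‖k‖ ^ (m + n))⁻¹ :=
  (hf.mul hg).congr_right fun k => by rw [pow_add, mul_inv]

end InverseNormPowers

lemma isBigO_const_div_pow {𝕜 : Type*} [NormedDivisionRing 𝕜] (l : Filter 𝕜) (c : 𝕜)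
    (n : ℕ) :
    (fun k : 𝕜 => c / k ^ n) =O[l] fun k => (‖k‖ ^ n)⁻¹ :=
  IsBigO.of_bound ‖c‖ <| Eventually.of_forall fun k => by
    rw [norm_div, norm_pow, div_eq_mul_inv, Real.norm_of_nonneg (by positivity)]

lemma Asymptotics.IsBigO.div_sub_of_sub_mul {α 𝕜 : Type*} [NormedField 𝕜] {l : Filter α}
    {a b t : α → 𝕜} {g : α → ℝ} {c : 𝕜} (ha : Tendsto a l (𝓝 c)) (hc : c ≠ 0)
    (h : (fun x => b x - t x * a x) =O[l] g) :
    (fun x => b x / a x - t x) =O[l] g := by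
  have hinv : (fun x => (a x)⁻¹) =O[l] fun _ => (1 : ℝ) := (ha.inv₀ hc).isBigO_one ℝ
  refine (h.mul hinv).congr' ?_ (Eventually.of_forall fun x => mul_one (g x))
  filter_upwards [ha.eventually_ne hc] with x hx
  field_simp

lemma expansion_sub_mul_expansion_eq (u v c k : ℂ) :
    u / (2 * I * k) - (v + c * u) / (2 * I * k) ^ 2
        - (u / (2 * I * k) + v / (4 * k ^ 2)) * (1 - c / (2 * I * k))
      = c * v / (8 * I) / k ^ 3 := by
  rcases eq_or_ne k 0 with rfl | hk
  · simp
  · field_simp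
    ring_nf
    simp only [I_sq]
    ring

theorem ratio_expansion_cancellation_general
    (l : Filter ℂ) (hl : Tendsto (fun k : ℂ => ‖k‖) l atTop)
    (lam : ℂ) (u v : ℂ) (J : ℝ)
    (a b : ℂ → ℂ)
    (ha : (fun k : ℂ => a k - (1 - lam * (J : ℂ) / (2 * Complex.I * k)))
      =O[l] fun k : ℂ => (‖k‖ ^ 2)⁻¹)
    (hb : (fun k : ℂ => b k
        - (u / (2 * Complex.I * k) - (v + lam * u * (J : ℂ)) / (2 * Complex.I * k) ^ 2))
      =O[l] fun k : ℂ => (‖k‖ ^ 3)⁻¹) :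
    (fun k : ℂ => b k / a k - (u / (2 * Complex.I * k) + v / (4 * k ^ 2)))
      =O[l] fun k : ℂ => (‖k‖ ^ 3)⁻¹ := by
  set t : ℂ → ℂ := fun k => u / (2 * Complex.I * k) + v / (4 * k ^ 2)
  have hJ_term : (fun k : ℂ => lam * J / (2 * Complex.I * k)) =O[l] fun k => (‖k‖ ^ 1)⁻¹ :=
    (isBigO_const_div_pow l (lam * J / (2 * Complex.I)) 1).congr_left fun k => by ring
  have ht : t =O[l] fun k => (‖k‖ ^ 1)⁻¹ :=
    ((isBigO_const_div_pow l (u / (2 * Complex.I)) 1).congr_left fun k => by ring).add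
      ((isBigO_const_div_pow l (v / 4) 2).congr_left (fun k => by ring)
        |>.trans (isBigO_inv_norm_pow_of_le hl (by norm_num)))
  have ha_one : Tendsto a l (𝓝 1) := by
    have h : (fun k => a k - 1) =O[l] fun k => (‖k‖ ^ 1)⁻¹ :=
      ((ha.trans (isBigO_inv_norm_pow_of_le hl (by norm_num))).sub hJ_term).congr_left
        fun k => by ring
    simpa using (h.trans_tendsto (tendsto_inv_norm_pow_atTop_zero hl one_ne_zero)).add_const 1
  refine IsBigO.div_sub_of_sub_mul ha_one one_ne_zero ?_
  -- `b - t a = (b - B) + λJv/(8ik³) - t (a - A)`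
  have hJv := isBigO_const_div_pow l (lam * J * v / (8 * Complex.I)) 3
  refine ((hb.add hJv).sub (ht.mul_inv_norm_pow ha)).congr_left fun k => ?_
  rw [← expansion_sub_mul_expansion_eq u v (lam * J) k]
  ring

/-- Cancellation of the integral `I = ∫₀^∞|q₀|²` in the large-`k` expansion of the ratio of
spectral functions: if `a(k) = 1 - λI/(2ik) + O(1/|k|²)` and
`b(k) = u/(2ik) - (v + λuI)/(2ik)² + O(1/|k|³)` along a filter `l` on which `|k| → ∞`, then
`b(k)/a(k) = u/(2ik) + v/(4k²) + O(1/|k|³)` along `l`. -/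
theorem ratio_expansion_cancellation
    (l : Filter ℂ) (hl : Tendsto (fun k : ℂ => ‖k‖) l atTop)
    (lam : ℂ) (hlam : lam = 1 ∨ lam = -1) (u v : ℂ) (J : ℝ)
    (a b : ℂ → ℂ)
    (ha : (fun k : ℂ => a k - (1 - lam * (J : ℂ) / (2 * Complex.I * k)))
      =O[l] fun k : ℂ => (‖k‖ ^ 2)⁻¹)
    (hb : (fun k : ℂ => b k
        - (u / (2 * Complex.I * k) - (v + lam * u * (J : ℂ)) / (2 * Complex.I * k) ^ 2))
      =O[l] fun k : ℂ => (‖k‖ ^ 3)⁻¹) :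
    (fun k : ℂ => b k / a k - (u / (2 * Complex.I * k) + v / (4 * k ^ 2)))
      =O[l] fun k : ℂ => (‖k‖ ^ 3)⁻¹ :=
  ratio_expansion_cancellation_general l hl lam u v J a b ha hb
end

section
/- Let λ ∈ {1,-1}, let k ∈ ℂ with Im k ≥ 0, and let q₀ : [0,∞) → ℂ be continuous with ∫₀^∞ |q₀(y)| dy < ∞. Then there exists exactly one pair of bounded continuous functions φ₁, φ₂ : [0,∞) → ℂ satisfying, for all x ≥ 0, φ₁(x) = -∫_x^∞ e^{-2ik(x-y)} q₀(y) φ₂(y) dy and φ₂(x) = 1 - λ ∫_x^∞ conj(q₀(y)) φ₁(y) dy. -/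
/-!
Let `w(x) = exp (2 ∫_x^∞ |q₀|)`. Since `w' = -2 |q₀| w`, one has `∫_x^∞ |q₀| w = (w(x) - 1) / 2`,
so with `|e^{-2ik(x-y)}| ≤ 1` for `y ≥ x` and `|λ| = 1` the right-hand side `V` of the system
satisfies `|Vφ - Vψ| ≤ D w / 2` whenever `|φ - ψ| ≤ D w`. Hence `V` is a contraction for the
weighted sup norm `sup |φ| / w`, and Banach's fixed point theorem gives a solution. Two bounded
solutions satisfy `|φ - ψ| ≤ C 2⁻ⁿ w` for every `n`, so they agree.
-/

open Complex MeasureTheory Set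

namespace VolterraNLS

open Filter Topology BoundedContinuousFunction

section Weight

variable {E F : Type*} [NormedAddCommGroup E] [NormedAddCommGroup F]

theorem hasDerivAt_integral_Ioi [NormedSpace ℝ E] [CompleteSpace E] {f : ℝ → E} {a b : ℝ}
    (hf : IntegrableOn f (Ioi a)) (hab : a < b) (hfb : ContinuousAt f b) :
    HasDerivAt (fun x => ∫ t in Ioi x, f t) (-f b) b := by
  have hprim : HasDerivAt (fun x => ∫ t in a..x, f t) (f b) b :=
    intervalIntegral.integral_hasDerivAt_right
      ((intervalIntegrable_iff_integrableOn_Ioc_of_le hab.le).2 (hf.mono_set Ioc_subset_Ioi_self))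
      (AEStronglyMeasurable.stronglyMeasurableAtFilter_of_mem hf.aestronglyMeasurable
        (Ioi_mem_nhds hab)) hfb
  have htail : (fun x => ∫ t in Ioi x, f t) =ᶠ[𝓝 b]
      fun x => (∫ t in Ioi a, f t) - ∫ t in a..x, f t := by
    filter_upwards [Ioi_mem_nhds hab] with x hx
    rw [← intervalIntegral.integral_Ioi_sub_Ioi hf (le_of_lt hx), sub_sub_cancel]
  simpa using (hprim.const_sub _).congr_of_eventuallyEq htail

theorem integrableOn_of_norm_le_mul {f : ℝ → F} {g : ℝ → E} {s : Set ℝ} {M : ℝ}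
    (hs : MeasurableSet s) (hf : IntegrableOn f s) (hg : ContinuousOn g s)
    (hgf : ∀ y ∈ s, ‖g y‖ ≤ M * ‖f y‖) : IntegrableOn g s :=
  (hf.norm.const_mul M).mono' (hg.aestronglyMeasurable hs)
    ((ae_restrict_iff' hs).2 (ae_of_all _ hgf))

/-- Weight of the Bielecki-type norm in which the Volterra map contracts. -/
noncomputable def weight (q : ℝ → F) (x : ℝ) : ℝ := Real.exp (2 * ∫ y in Ioi x, ‖q y‖)

theorem one_le_weight (q : ℝ → F) (x : ℝ) : 1 ≤ weight q x :=
  Real.one_le_exp <| mul_nonneg zero_le_two <|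
    setIntegral_nonneg measurableSet_Ioi fun _ _ => norm_nonneg _

theorem weight_pos (q : ℝ → F) (x : ℝ) : 0 < weight q x := Real.exp_pos _

theorem weight_le_weight_zero {q : ℝ → F} (hq : IntegrableOn q (Ioi 0)) {x : ℝ} (hx : 0 ≤ x) :
    weight q x ≤ weight q 0 :=
  Real.exp_le_exp.2 <| mul_le_mul_of_nonneg_left (setIntegral_mono_set hq.norm
    (ae_of_all _ fun _ => norm_nonneg _) (Ioi_subset_Ioi hx).eventuallyLE) zero_le_two

theorem continuousOn_weight {q : ℝ → F} (hq : IntegrableOn q (Ioi 0)) :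
    ContinuousOn (weight q) (Ici 0) :=
  (continuousOn_const.mul (IntegrableOn.continuousOn_Ici_primitive_Ioi hq.norm)).rexp

theorem integrableOn_norm_mul_weight {q : ℝ → F} (hqc : Continuous q) (hq : IntegrableOn q (Ioi 0))
    {x : ℝ} (hx : 0 ≤ x) : IntegrableOn (fun y => ‖q y‖ * weight q y) (Ioi x) := by
  have hsub : Ioi x ⊆ Ici 0 := Ioi_subset_Ici hx
  refine integrableOn_of_norm_le_mul (M := weight q 0) measurableSet_Ioi
    (hq.mono_set (Ioi_subset_Ioi hx))
    (hqc.norm.continuousOn.mul ((continuousOn_weight hq).mono hsub)) fun y hy => ?_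
  rw [norm_mul, norm_norm, Real.norm_of_nonneg (weight_pos q y).le, mul_comm]
  exact mul_le_mul_of_nonneg_right (weight_le_weight_zero hq (hsub hy)) (norm_nonneg _)

theorem integral_norm_mul_weight {q : ℝ → F} (hqc : Continuous q) (hq : IntegrableOn q (Ioi 0))
    {x : ℝ} (hx : 0 ≤ x) :
    ∫ y in Ioi x, ‖q y‖ * weight q y = (weight q x - 1) / 2 := by
  have hderiv : ∀ y ∈ Ioi x, HasDerivAt (fun t => -weight q t / 2) (‖q y‖ * weight q y) y := by
    intro y hy
    have := ((hasDerivAt_integral_Ioi hq.norm (hx.trans_lt hy) hqc.norm.continuousAt).const_mul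
      2).exp.neg.div_const 2
    exact this.congr_deriv (by unfold weight; ring)
  have hcont : ContinuousWithinAt (fun t => -weight q t / 2) (Ici x) x :=
    (((continuousOn_weight hq).mono (Ici_subset_Ici.2 hx)).neg.div_const 2).continuousWithinAt
      self_mem_Ici
  have hlim : Tendsto (fun t => -weight q t / 2) atTop (𝓝 (-1 / 2)) := by
    have := (tendsto_integral_Ioi_zero (f := fun y => ‖q y‖) (μ := volume) tendsto_id).const_mul 2
    simpa [weight] using this.rexp.neg.div_const 2
  rw [integral_Ioi_of_hasDerivAt_of_tendsto hcont hderiv (integrableOn_norm_mul_weight hqc hq hx)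
    hlim]
  ring

theorem norm_setIntegral_Ioi_le_half_mul_weight [NormedSpace ℝ E] {q : ℝ → F} (hqc : Continuous q)
    (hq : IntegrableOn q (Ioi 0)) {g : ℝ → E} {x D : ℝ} (hx : 0 ≤ x) (hD : 0 ≤ D)
    (hg : ∀ y ∈ Ioi x, ‖g y‖ ≤ D * (‖q y‖ * weight q y)) :
    ‖∫ y in Ioi x, g y‖ ≤ D / 2 * weight q x :=
  calc ‖∫ y in Ioi x, g y‖ ≤ ∫ y in Ioi x, D * (‖q y‖ * weight q y) :=
        norm_integral_le_of_norm_le ((integrableOn_norm_mul_weight hqc hq hx).const_mul D)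
          ((ae_restrict_iff' measurableSet_Ioi).2 (ae_of_all _ hg))
    _ = D / 2 * (weight q x - 1) := by
        rw [integral_const_mul, integral_norm_mul_weight hqc hq hx]; ring
    _ ≤ D / 2 * weight q x := by gcongr; linarith

end Weight

section Volterra

variable {q₀ : ℝ → ℂ} {k lam : ℂ} {φ ψ : ℝ → ℂ × ℂ} {x M N : ℝ}

noncomputable def volterra (q₀ : ℝ → ℂ) (k lam : ℂ) (φ : ℝ → ℂ × ℂ) (x : ℝ) : ℂ × ℂ :=
  (-∫ y in Ioi x, Complex.exp (-2 * I * k * ((x : ℂ) - (y : ℂ))) * q₀ y * (φ y).2,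
    1 - lam * ∫ y in Ioi x, (starRingEnd ℂ) (q₀ y) * (φ y).1)

theorem norm_exp_kernel_le (hk : 0 ≤ k.im) {y : ℝ} (hxy : x ≤ y) :
    ‖Complex.exp (-2 * I * k * ((x : ℂ) - (y : ℂ)))‖ ≤ 1 := by
  have hre : (-2 * I * k * ((x : ℂ) - (y : ℂ))).re = 2 * k.im * (x - y) := by
    simp [Complex.mul_re]
  rw [Complex.norm_exp, Real.exp_le_one_iff, hre]
  nlinarith

-- The second factor is the kernel at `x = 0`, so `(volterra _ _ _ φ x).1` is `e^{-2ikx}` times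
-- a tail integral of a fixed function, which makes it continuous in `x`.
theorem exp_kernel_eq_mul (k : ℂ) (x y : ℝ) :
    Complex.exp (-2 * I * k * ((x : ℂ) - (y : ℂ))) =
      Complex.exp (-2 * I * k * x) * Complex.exp (-2 * I * k * (((0 : ℝ) : ℂ) - (y : ℂ))) := by
  rw [← Complex.exp_add]; push_cast; ring_nf

theorem integrableOn_volterra_fst_integrand (hk : 0 ≤ k.im) (hqc : Continuous q₀)
    (hq : IntegrableOn q₀ (Ioi 0)) (hφ : ContinuousOn φ (Ici 0)) (hφM : ∀ y ∈ Ici 0, ‖φ y‖ ≤ M)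
    (hx : 0 ≤ x) :
    IntegrableOn (fun y : ℝ => Complex.exp (-2 * I * k * ((x : ℂ) - (y : ℂ))) * q₀ y * (φ y).2)
      (Ioi x) := by
  have hsub : Ioi x ⊆ Ici 0 := Ioi_subset_Ici hx
  refine integrableOn_of_norm_le_mul (M := M) measurableSet_Ioi (hq.mono_set (Ioi_subset_Ioi hx))
    (((by fun_prop : Continuous fun y : ℝ => Complex.exp (-2 * I * k * ((x : ℂ) - (y : ℂ))))
      |>.mul hqc).continuousOn.mul (hφ.snd.mono hsub))
    fun y hy => ?_
  rw [norm_mul, norm_mul]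
  calc _ ≤ 1 * ‖q₀ y‖ * M := by
        gcongr
        exacts [norm_exp_kernel_le hk hy.out.le, (norm_snd_le _).trans (hφM y (hsub hy))]
    _ = M * ‖q₀ y‖ := by ring

theorem integrableOn_volterra_snd_integrand (hqc : Continuous q₀) (hq : IntegrableOn q₀ (Ioi 0))
    (hφ : ContinuousOn φ (Ici 0)) (hφM : ∀ y ∈ Ici 0, ‖φ y‖ ≤ M) (hx : 0 ≤ x) :
    IntegrableOn (fun y : ℝ => (starRingEnd ℂ) (q₀ y) * (φ y).1) (Ioi x) := by
  have hsub : Ioi x ⊆ Ici 0 := Ioi_subset_Ici hx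
  refine integrableOn_of_norm_le_mul (M := M) measurableSet_Ioi (hq.mono_set (Ioi_subset_Ioi hx))
    ((Complex.continuous_conj.comp hqc).continuousOn.mul (hφ.fst.mono hsub)) fun y hy => ?_
  rw [norm_mul, RCLike.norm_conj, mul_comm]
  gcongr
  exact (norm_fst_le _).trans (hφM y (hsub hy))

theorem continuousOn_volterra (hk : 0 ≤ k.im) (hqc : Continuous q₀)
    (hq : IntegrableOn q₀ (Ioi 0)) (hφ : ContinuousOn φ (Ici 0)) (hφM : ∀ y ∈ Ici 0, ‖φ y‖ ≤ M) :
    ContinuousOn (volterra q₀ k lam φ) (Ici 0) := by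
  have hsplit : (fun x => (volterra q₀ k lam φ x).1) = fun x : ℝ => -(Complex.exp (-2 * I * k * x) *
      ∫ y in Ioi x, Complex.exp (-2 * I * k * (((0 : ℝ) : ℂ) - (y : ℂ))) * q₀ y * (φ y).2) := by
    ext x
    simp_rw [volterra, exp_kernel_eq_mul k x, ← integral_const_mul, mul_assoc]
  have hfst : ContinuousOn (fun x => (volterra q₀ k lam φ x).1) (Ici 0) := by
    rw [hsplit]
    exact ((Continuous.continuousOn (by fun_prop)).mul (IntegrableOn.continuousOn_Ici_primitive_Ioi
      (integrableOn_volterra_fst_integrand hk hqc hq hφ hφM le_rfl))).neg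
  exact hfst.prodMk <| continuousOn_const.sub <| continuousOn_const.mul <|
    IntegrableOn.continuousOn_Ici_primitive_Ioi
      (integrableOn_volterra_snd_integrand hqc hq hφ hφM le_rfl)

theorem norm_volterra_fst_sub_le (hk : 0 ≤ k.im) (hqc : Continuous q₀)
    (hq : IntegrableOn q₀ (Ioi 0)) (hφ : ContinuousOn φ (Ici 0)) (hψ : ContinuousOn ψ (Ici 0))
    (hφM : ∀ y ∈ Ici 0, ‖φ y‖ ≤ M) (hψN : ∀ y ∈ Ici 0, ‖ψ y‖ ≤ N) {D : ℝ} (hD : 0 ≤ D)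
    (hφψ : ∀ y ∈ Ici 0, ‖φ y - ψ y‖ ≤ D * weight q₀ y) (hx : 0 ≤ x) :
    ‖(volterra q₀ k lam φ x).1 - (volterra q₀ k lam ψ x).1‖ ≤ D / 2 * weight q₀ x := by
  rw [volterra, volterra, neg_sub_neg, norm_sub_rev, ← integral_sub
    (integrableOn_volterra_fst_integrand hk hqc hq hφ hφM hx)
    (integrableOn_volterra_fst_integrand hk hqc hq hψ hψN hx)]
  refine norm_setIntegral_Ioi_le_half_mul_weight hqc hq hx hD fun y hy => ?_
  rw [← mul_sub, norm_mul, norm_mul, ← Prod.snd_sub]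
  calc _ ≤ 1 * ‖q₀ y‖ * (D * weight q₀ y) := by
        gcongr
        exacts [norm_exp_kernel_le hk hy.out.le,
          (norm_snd_le _).trans (hφψ y (Ioi_subset_Ici hx hy))]
    _ = D * (‖q₀ y‖ * weight q₀ y) := by ring

theorem norm_volterra_snd_sub_le (hlam : ‖lam‖ ≤ 1) (hqc : Continuous q₀)
    (hq : IntegrableOn q₀ (Ioi 0)) (hφ : ContinuousOn φ (Ici 0)) (hψ : ContinuousOn ψ (Ici 0))
    (hφM : ∀ y ∈ Ici 0, ‖φ y‖ ≤ M) (hψN : ∀ y ∈ Ici 0, ‖ψ y‖ ≤ N) {D : ℝ} (hD : 0 ≤ D)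
    (hφψ : ∀ y ∈ Ici 0, ‖φ y - ψ y‖ ≤ D * weight q₀ y) (hx : 0 ≤ x) :
    ‖(volterra q₀ k lam φ x).2 - (volterra q₀ k lam ψ x).2‖ ≤ D / 2 * weight q₀ x := by
  rw [volterra, volterra, sub_sub_sub_cancel_left, ← mul_sub, norm_mul, ← integral_sub
    (integrableOn_volterra_snd_integrand hqc hq hψ hψN hx)
    (integrableOn_volterra_snd_integrand hqc hq hφ hφM hx)]
  refine (mul_le_of_le_one_left (norm_nonneg _) hlam).trans ?_
  refine norm_setIntegral_Ioi_le_half_mul_weight hqc hq hx hD fun y hy => ?_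
  rw [← mul_sub, norm_mul, RCLike.norm_conj, norm_sub_rev, ← Prod.fst_sub, mul_left_comm]
  gcongr
  exact (norm_fst_le _).trans (hφψ y (Ioi_subset_Ici hx hy))

theorem norm_volterra_sub_le (hk : 0 ≤ k.im) (hlam : ‖lam‖ ≤ 1) (hqc : Continuous q₀)
    (hq : IntegrableOn q₀ (Ioi 0)) (hφ : ContinuousOn φ (Ici 0)) (hψ : ContinuousOn ψ (Ici 0))
    (hφM : ∀ y ∈ Ici 0, ‖φ y‖ ≤ M) (hψN : ∀ y ∈ Ici 0, ‖ψ y‖ ≤ N) {D : ℝ} (hD : 0 ≤ D)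
    (hφψ : ∀ y ∈ Ici 0, ‖φ y - ψ y‖ ≤ D * weight q₀ y) (hx : 0 ≤ x) :
    ‖volterra q₀ k lam φ x - volterra q₀ k lam ψ x‖ ≤ D / 2 * weight q₀ x :=
  norm_prod_le_iff.2 ⟨norm_volterra_fst_sub_le hk hqc hq hφ hψ hφM hψN hD hφψ hx,
    norm_volterra_snd_sub_le hlam hqc hq hφ hψ hφM hψN hD hφψ hx⟩

theorem eqOn_of_eq_volterra (hk : 0 ≤ k.im) (hlam : ‖lam‖ ≤ 1) (hqc : Continuous q₀)
    (hq : IntegrableOn q₀ (Ioi 0)) (hφ : ContinuousOn φ (Ici 0)) (hψ : ContinuousOn ψ (Ici 0))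
    (hφM : ∀ y ∈ Ici 0, ‖φ y‖ ≤ M) (hψN : ∀ y ∈ Ici 0, ‖ψ y‖ ≤ N)
    (hφfix : ∀ x ∈ Ici 0, φ x = volterra q₀ k lam φ x)
    (hψfix : ∀ x ∈ Ici 0, ψ x = volterra q₀ k lam ψ x) : EqOn φ ψ (Ici 0) := by
  have hMN : 0 ≤ M + N :=
    add_nonneg ((norm_nonneg _).trans (hφM 0 self_mem_Ici))
      ((norm_nonneg _).trans (hψN 0 self_mem_Ici))
  have hiter (n : ℕ) : ∀ y ∈ Ici 0, ‖φ y - ψ y‖ ≤ (M + N) * (1 / 2) ^ n * weight q₀ y := by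
    induction n with
    | zero =>
      intro y hy
      rw [pow_zero, mul_one]
      exact (norm_sub_le_of_le (hφM y hy) (hψN y hy)).trans
        (le_mul_of_one_le_right hMN (one_le_weight q₀ y))
    | succ n ih =>
      intro y hy
      rw [hφfix y hy, hψfix y hy]
      convert norm_volterra_sub_le hk hlam hqc hq hφ hψ hφM hψN (by positivity) ih hy using 1
      ring
  intro y hy
  have hlim : Tendsto (fun n : ℕ => (M + N) * (1 / 2) ^ n * weight q₀ y) atTop (𝓝 0) := by
    simpa using ((tendsto_pow_atTop_nhds_zero_of_lt_one (by norm_num : (0 : ℝ) ≤ 1 / 2)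
      (by norm_num)).const_mul (M + N)).mul_const (weight q₀ y)
  exact sub_eq_zero.1 (norm_le_zero_iff.1 (ge_of_tendsto' hlim fun n => hiter n y hy))

end Volterra

section FixedPoint

variable {q₀ : ℝ → ℂ} {k lam : ℂ}

/-- `volterra` conjugated by the weight, frozen at its value at `0` on `(-∞, 0]` so that it acts on
bounded continuous functions on `ℝ`. -/
noncomputable def weightedVolterra (q₀ : ℝ → ℂ) (k lam : ℂ) (u : ℝ →ᵇ ℂ × ℂ) (x : ℝ) : ℂ × ℂ :=
  (weight q₀ (max x 0))⁻¹ • volterra q₀ k lam (fun y => weight q₀ y • u y) (max x 0)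

theorem continuousOn_weight_smul (hq : IntegrableOn q₀ (Ioi 0)) (u : ℝ →ᵇ ℂ × ℂ) :
    ContinuousOn (fun y => weight q₀ y • u y) (Ici 0) :=
  (continuousOn_weight hq).smul u.continuous.continuousOn

theorem norm_weight_smul_le (hq : IntegrableOn q₀ (Ioi 0)) (u : ℝ →ᵇ ℂ × ℂ) :
    ∀ y ∈ Ici 0, ‖weight q₀ y • u y‖ ≤ weight q₀ 0 * ‖u‖ := fun y hy => by
  rw [norm_smul, Real.norm_of_nonneg (weight_pos q₀ y).le]
  exact mul_le_mul (weight_le_weight_zero hq hy) (u.norm_coe_le_norm y) (norm_nonneg _)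
    (weight_pos q₀ 0).le

theorem continuous_weightedVolterra (hk : 0 ≤ k.im) (hqc : Continuous q₀)
    (hq : IntegrableOn q₀ (Ioi 0)) (u : ℝ →ᵇ ℂ × ℂ) :
    Continuous (weightedVolterra q₀ k lam u) :=
  (((continuousOn_weight hq).inv₀ fun y _ => (weight_pos q₀ y).ne').smul
    (continuousOn_volterra hk hqc hq (continuousOn_weight_smul hq u)
      (norm_weight_smul_le hq u))).comp_continuous (continuous_id.max continuous_const)
    fun x => le_max_right x 0

theorem dist_weightedVolterra_le (hk : 0 ≤ k.im) (hlam : ‖lam‖ ≤ 1) (hqc : Continuous q₀)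
    (hq : IntegrableOn q₀ (Ioi 0)) (u v : ℝ →ᵇ ℂ × ℂ) (x : ℝ) :
    dist (weightedVolterra q₀ k lam u x) (weightedVolterra q₀ k lam v x) ≤ dist u v / 2 := by
  have hw : 0 < weight q₀ (max x 0) := weight_pos q₀ _
  have huv : ∀ y ∈ Ici 0, ‖weight q₀ y • u y - weight q₀ y • v y‖ ≤ dist u v * weight q₀ y :=
    fun y _ => by
      rw [← smul_sub, norm_smul, Real.norm_of_nonneg (weight_pos q₀ y).le, mul_comm, ← dist_eq_norm]
      exact mul_le_mul_of_nonneg_right (u.dist_coe_le_dist y) (weight_pos q₀ y).le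
  rw [dist_eq_norm, weightedVolterra, weightedVolterra, ← smul_sub, norm_smul,
    Real.norm_of_nonneg (inv_nonneg.2 hw.le), inv_mul_le_iff₀ hw]
  calc _ ≤ dist u v / 2 * weight q₀ (max x 0) :=
        norm_volterra_sub_le hk hlam hqc hq (continuousOn_weight_smul hq u)
          (continuousOn_weight_smul hq v) (norm_weight_smul_le hq u) (norm_weight_smul_le hq v)
          dist_nonneg huv (le_max_right x 0)
    _ = _ := mul_comm _ _

theorem norm_weightedVolterra_le (hk : 0 ≤ k.im) (hlam : ‖lam‖ ≤ 1) (hqc : Continuous q₀)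
    (hq : IntegrableOn q₀ (Ioi 0)) (u : ℝ →ᵇ ℂ × ℂ) (x : ℝ) :
    ‖weightedVolterra q₀ k lam u x‖ ≤ 1 + ‖u‖ / 2 := by
  have hzero : ‖weightedVolterra q₀ k lam 0 x‖ ≤ 1 := by
    simpa [weightedVolterra, volterra, abs_of_pos (weight_pos q₀ _)]
      using inv_le_one_of_one_le₀ (one_le_weight q₀ (max x 0))
  calc _ ≤ ‖weightedVolterra q₀ k lam 0 x‖ +
        ‖weightedVolterra q₀ k lam u x - weightedVolterra q₀ k lam 0 x‖ :=
        norm_le_norm_add_norm_sub' _ _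
    _ ≤ 1 + ‖u‖ / 2 := add_le_add hzero
        (by simpa [dist_eq_norm] using dist_weightedVolterra_le hk hlam hqc hq u 0 x)

theorem exists_eq_volterra (hk : 0 ≤ k.im) (hlam : ‖lam‖ ≤ 1) (hqc : Continuous q₀)
    (hq : IntegrableOn q₀ (Ioi 0)) :
    ∃ φ : ℝ → ℂ × ℂ, ContinuousOn φ (Ici 0) ∧ (∃ M, ∀ y ∈ Ici 0, ‖φ y‖ ≤ M) ∧
      ∀ x ∈ Ici 0, φ x = volterra q₀ k lam φ x := by
  let T (u : ℝ →ᵇ ℂ × ℂ) : ℝ →ᵇ ℂ × ℂ := .ofNormedAddCommGroup (weightedVolterra q₀ k lam u)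
    (continuous_weightedVolterra hk hqc hq u) _ (norm_weightedVolterra_le hk hlam hqc hq u)
  have hT : ContractingWith (1 / 2) T := by
    refine ⟨by rw [← NNReal.coe_lt_coe]; norm_num, LipschitzWith.of_dist_le_mul fun u v => ?_⟩
    refine (BoundedContinuousFunction.dist_le (by positivity)).2 fun x => ?_
    simpa [T, div_eq_inv_mul] using dist_weightedVolterra_le hk hlam hqc hq u v x
  set u := ContractingWith.fixedPoint T hT
  refine ⟨fun y => weight q₀ y • u y, continuousOn_weight_smul hq u,
    ⟨_, norm_weight_smul_le hq u⟩, fun x hx => ?_⟩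
  have hu : weightedVolterra q₀ k lam u x = u x := congrArg (· x) hT.fixedPoint_isFixedPt
  rw [weightedVolterra, max_eq_left hx] at hu
  change weight q₀ x • u x = _
  rw [← hu, smul_inv_smul₀ (weight_pos q₀ x).ne']

end FixedPoint

end VolterraNLS

open VolterraNLS

/-- Existence and uniqueness of bounded continuous solutions of the linear Volterra system
defining the NLS spectral functions: for `λ ∈ {1,-1}`, `Im k ≥ 0` and `q₀` continuous and
integrable on `[0,∞)`, there is exactly one pair of bounded continuous functions `(φ₁, φ₂)`
on `[0,∞)` with `φ₁(x) = -∫_x^∞ e^{-2ik(x-y)} q₀(y) φ₂(y) dy` and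
`φ₂(x) = 1 - λ ∫_x^∞ conj(q₀(y)) φ₁(y) dy` for all `x ≥ 0`. -/
theorem volterra_existence_uniqueness
    (lam : ℂ) (hlam : lam = 1 ∨ lam = -1) (k : ℂ) (hk : 0 ≤ k.im)
    (q₀ : ℝ → ℂ) (hq₀ : Continuous q₀) (hint : IntegrableOn q₀ (Ici 0)) :
    ∃ φ₁ φ₂ : ℝ → ℂ,
      (ContinuousOn φ₁ (Ici 0) ∧ ContinuousOn φ₂ (Ici 0) ∧
        (∃ M : ℝ, ∀ x : ℝ, 0 ≤ x → ‖φ₁ x‖ ≤ M ∧ ‖φ₂ x‖ ≤ M) ∧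
        (∀ x : ℝ, 0 ≤ x →
          φ₁ x = -∫ y in Ioi x,
              Complex.exp (-2 * Complex.I * k * ((x : ℂ) - (y : ℂ))) * q₀ y * φ₂ y ∧
          φ₂ x = 1 - lam * ∫ y in Ioi x, (starRingEnd ℂ) (q₀ y) * φ₁ y)) ∧
      (∀ ψ₁ ψ₂ : ℝ → ℂ,
        ContinuousOn ψ₁ (Ici 0) → ContinuousOn ψ₂ (Ici 0) →
        (∃ M : ℝ, ∀ x : ℝ, 0 ≤ x → ‖ψ₁ x‖ ≤ M ∧ ‖ψ₂ x‖ ≤ M) →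
        (∀ x : ℝ, 0 ≤ x →
          ψ₁ x = -∫ y in Ioi x,
              Complex.exp (-2 * Complex.I * k * ((x : ℂ) - (y : ℂ))) * q₀ y * ψ₂ y ∧
          ψ₂ x = 1 - lam * ∫ y in Ioi x, (starRingEnd ℂ) (q₀ y) * ψ₁ y) →
        EqOn ψ₁ φ₁ (Ici 0) ∧ EqOn ψ₂ φ₂ (Ici 0)) := by
  have hlam' : ‖lam‖ ≤ 1 := by rcases hlam with rfl | rfl <;> simp
  have hq : IntegrableOn q₀ (Ioi 0) := hint.mono_set Ioi_subset_Ici_self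
  obtain ⟨φ, hφc, ⟨M, hM⟩, hφ⟩ := exists_eq_volterra hk hlam' hq₀ hq
  refine ⟨fun x => (φ x).1, fun x => (φ x).2, ⟨hφc.fst, hφc.snd,
    ⟨M, fun x hx => norm_prod_le_iff.1 (hM x hx)⟩, fun x hx => Prod.ext_iff.1 (hφ x hx)⟩, ?_⟩
  rintro ψ₁ ψ₂ hψ₁ hψ₂ ⟨N, hN⟩ hψ
  have hψφ := eqOn_of_eq_volterra hk hlam' hq₀ hq (hψ₁.prodMk hψ₂) hφc
    (fun x hx => norm_prod_le_iff.2 (hN x hx)) hM (fun x hx => Prod.ext_iff.2 (hψ x hx)) hφ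
  exact ⟨fun x hx => congrArg Prod.fst (hψφ hx), fun x hx => congrArg Prod.snd (hψφ hx)⟩
end
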